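/- The disease dies out in the base SEIR model (the system stabilizes without an infectious population): for any nonnegative solution with S(0) + E(0) + I(0) + R(0) = N, one has I(t) → 0 and E(t) → 0 as t → ∞. -/

import Mathlib

/-!
Along a nonnegative solution, `S + E + I` and `S + E` are nonnegative with derivatives `-I/τI` and
`-E/τE`. Hence they are nonincreasing, and `I`, `E` are integrable on `(0, ∞)`. In particular
`S`, `E`, `I` stay below `S 0 + E 0 + I 0`, which bounds `I' ≤ E/τE` and `E' ≤ β₀ S I / N` from
above. A nonnegative integrable function whose derivative is bounded above tends to `0` (Barbalat):
if `f t ≥ ε`, then `f ≥ ε/2` on a window `[t - δ, t]` of fixed length, while the integrals over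
such windows tend to `0`.
-/

open Set Filter Topology MeasureTheory intervalIntegral

lemma antitoneOn_Ici_of_hasDerivAt_nonpos {f f' : ℝ → ℝ} {a : ℝ}
    (hf : ∀ t ≥ a, HasDerivAt f (f' t) t) (hf' : ∀ t ≥ a, f' t ≤ 0) : AntitoneOn f (Ici a) := by
  refine antitoneOn_of_hasDerivWithinAt_nonpos (f' := f') (convex_Ici a)
    (fun t ht => (hf t ht).continuousAt.continuousWithinAt) (fun t ht => ?_) (fun t ht => ?_)
  · rw [interior_Ici] at ht
    exact (hf t ht.le).hasDerivWithinAt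
  · rw [interior_Ici] at ht
    exact hf' t ht.le

lemma sub_le_mul_sub_of_hasDerivAt_le {f f' : ℝ → ℝ} {a C s t : ℝ}
    (hf : ∀ t ≥ a, HasDerivAt f (f' t) t) (hf'C : ∀ t ≥ a, f' t ≤ C) (hs : a ≤ s) (hst : s ≤ t) :
    f t - f s ≤ C * (t - s) := by
  have hanti : AntitoneOn (fun x => f x - C * x) (Ici a) :=
    antitoneOn_Ici_of_hasDerivAt_nonpos
      (fun x hx => (hf x hx).sub ((hasDerivAt_id x).const_mul C))
      (fun x hx => by linarith [hf'C x hx])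
  have := hanti (mem_Ici.2 hs) (mem_Ici.2 (hs.trans hst)) hst
  simp only at this
  linarith

lemma integrableOn_Ioi_of_hasDerivAt_neg {V f : ℝ → ℝ} {a m : ℝ}
    (hV : ∀ t ≥ a, HasDerivAt V (-f t) t) (hf : ∀ t ≥ a, 0 ≤ f t) (hVm : ∀ t ≥ a, m ≤ V t) :
    IntegrableOn f (Ioi a) := by
  have hloc : ∀ b, IntegrableOn f (Ioc a b) := fun b =>
    integrableOn_deriv_of_nonneg (g := fun t => -V t)
      (fun t ht => (hV t ht.1).continuousAt.neg.continuousWithinAt)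
      (fun t ht => by simpa using (hV t ht.1.le).fun_neg) (fun t ht => hf t ht.1.le)
  refine integrableOn_Ioi_of_intervalIntegral_norm_bounded (V a - m) a hloc tendsto_id ?_
  filter_upwards [eventually_ge_atTop a] with b hb
  have hint : IntervalIntegrable f volume a b :=
    (intervalIntegrable_iff_integrableOn_Ioc_of_le hb).2 (hloc b)
  have hab : ∀ t ∈ uIcc a b, a ≤ t := fun t ht => by
    rw [uIcc_of_le hb] at ht
    exact ht.1
  have hFTC : ∫ t in a..b, -f t = V b - V a :=
    integral_eq_sub_of_hasDerivAt (fun t ht => hV t (hab t ht)) hint.neg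
  calc ∫ t in a..b, ‖f t‖ = ∫ t in a..b, f t :=
        integral_congr fun t ht => Real.norm_of_nonneg (hf t (hab t ht))
    _ = V a - V b := by rw [intervalIntegral.integral_neg] at hFTC; linarith
    _ ≤ V a - m := by linarith [hVm b hb]

lemma tendsto_intervalIntegral_window {f : ℝ → ℝ} {a : ℝ} (hf : IntegrableOn f (Ioi a)) (δ : ℝ) :
    Tendsto (fun t => ∫ s in (t - δ)..t, f s) atTop (𝓝 0) := by
  have hF := intervalIntegral_tendsto_integral_Ioi a hf tendsto_id
  have hFδ := intervalIntegral_tendsto_integral_Ioi a hf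
    (tendsto_atTop_add_const_right _ (-δ) tendsto_id)
  have hlim := hF.sub hFδ
  rw [sub_self] at hlim
  refine hlim.congr' ?_
  have hii : ∀ b ≥ a, IntervalIntegrable f volume a b := fun b hb =>
    (intervalIntegrable_iff_integrableOn_Ioc_of_le hb).2 (hf.mono_set Ioc_subset_Ioi_self)
  filter_upwards [eventually_ge_atTop a, eventually_ge_atTop (a + δ)] with t hta htδ
  rw [id, ← sub_eq_add_neg]
  exact integral_interval_sub_left (hii t hta) (hii (t - δ) (by linarith))

lemma mul_sub_le_intervalIntegral_of_hasDerivAt_le {f f' : ℝ → ℝ} {a C δ t : ℝ}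
    (hf : ∀ t ≥ a, HasDerivAt f (f' t) t) (hf'C : ∀ t ≥ a, f' t ≤ C) (hC : 0 ≤ C) (hδ : 0 ≤ δ)
    (ht : a + δ ≤ t) :
    δ * (f t - C * δ) ≤ ∫ s in (t - δ)..t, f s := by
  have hint : IntervalIntegrable f volume (t - δ) t :=
    ContinuousOn.intervalIntegrable fun s hs => by
      rw [uIcc_of_le (by linarith)] at hs
      exact (hf s (by linarith [hs.1])).continuousAt.continuousWithinAt
  calc δ * (f t - C * δ) = ∫ _ in (t - δ)..t, (f t - C * δ) := by
        rw [intervalIntegral.integral_const, smul_eq_mul, sub_sub_cancel]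
    _ ≤ ∫ s in (t - δ)..t, f s := by
      refine integral_mono_on (by linarith) intervalIntegrable_const hint fun s hs => ?_
      have := sub_le_mul_sub_of_hasDerivAt_le hf hf'C (by linarith [hs.1]) hs.2
      nlinarith [hs.1]

theorem tendsto_zero_of_integrableOn_Ioi_of_hasDerivAt_le {f f' : ℝ → ℝ} {a C : ℝ}
    (hf : ∀ t ≥ a, HasDerivAt f (f' t) t) (hf'C : ∀ t ≥ a, f' t ≤ C)
    (hf0 : ∀ t ≥ a, 0 ≤ f t) (hint : IntegrableOn f (Ioi a)) :
    Tendsto f atTop (𝓝 0) := by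
  wlog hC : 0 < C generalizing C
  · exact this (fun t ht => (hf'C t ht).trans (le_max_left C 1)) (lt_max_of_lt_right one_pos)
  refine tendsto_order.2 ⟨fun b hb => ?_, fun ε hε => ?_⟩
  · filter_upwards [eventually_ge_atTop a] with t ht
    exact hb.trans_le (hf0 t ht)
  set δ := ε / (2 * C) with hδ_def
  have hδ : 0 < δ := by positivity
  have hCδ : C * δ = ε / 2 := by rw [hδ_def]; field_simp
  filter_upwards [eventually_ge_atTop (a + δ),
    (tendsto_intervalIntegral_window hint δ).eventually
      (gt_mem_nhds (by positivity : 0 < δ * (ε / 2)))]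
    with t ht hwin
  have hlow := mul_sub_le_intervalIntegral_of_hasDerivAt_le hf hf'C hC.le hδ.le ht
  rw [hCδ] at hlow
  nlinarith

lemma seir_total_le_initial {β₀ τE τI N : ℝ} {S E I : ℝ → ℝ} (hτI : 0 < τI)
    (hS : ∀ t ≥ (0:ℝ), HasDerivAt S (-(β₀ * S t * I t / N)) t)
    (hE : ∀ t ≥ (0:ℝ), HasDerivAt E (β₀ * S t * I t / N - E t / τE) t)
    (hI : ∀ t ≥ (0:ℝ), HasDerivAt I (E t / τE - I t / τI) t)
    (hInn : ∀ t ≥ (0:ℝ), 0 ≤ I t) {t : ℝ} (ht : 0 ≤ t) :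
    S t + E t + I t ≤ S 0 + E 0 + I 0 := by
  refine antitoneOn_Ici_of_hasDerivAt_nonpos (fun s hs => ((hS s hs).add (hE s hs)).add (hI s hs))
    (fun s hs => ?_) self_mem_Ici ht ht
  have : 0 ≤ I s / τI := div_nonneg (hInn s hs) hτI.le
  linarith

theorem seir_disease_dies_out_general
    (β₀ τE τI N : ℝ) (hβ₀ : 0 < β₀) (hτE : 0 < τE) (hτI : 0 < τI) (hN : 0 < N)
    (S E I R : ℝ → ℝ)
    (hS : ∀ t ≥ (0:ℝ), HasDerivAt S (-(β₀ * S t * I t / N)) t)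
    (hE : ∀ t ≥ (0:ℝ), HasDerivAt E (β₀ * S t * I t / N - E t / τE) t)
    (hI : ∀ t ≥ (0:ℝ), HasDerivAt I (E t / τE - I t / τI) t)
    (hnonneg : ∀ t ≥ (0:ℝ), 0 ≤ S t ∧ 0 ≤ E t ∧ 0 ≤ I t ∧ 0 ≤ R t) :
    Filter.Tendsto I Filter.atTop (nhds 0) ∧ Filter.Tendsto E Filter.atTop (nhds 0) := by
  have hSnn (t) (ht : t ≥ 0) : 0 ≤ S t := (hnonneg t ht).1
  have hEnn (t) (ht : t ≥ 0) : 0 ≤ E t := (hnonneg t ht).2.1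
  have hInn (t) (ht : t ≥ 0) : 0 ≤ I t := (hnonneg t ht).2.2.1
  have hP (t) (ht : t ≥ 0) : HasDerivAt (fun u => τI * (S u + E u + I u)) (-I t) t :=
    ((((hS t ht).add (hE t ht)).add (hI t ht)).const_mul τI).congr_deriv (by field_simp; ring)
  have hQ (t) (ht : t ≥ 0) : HasDerivAt (fun u => τE * (S u + E u)) (-E t) t :=
    (((hS t ht).add (hE t ht)).const_mul τE).congr_deriv (by field_simp; ring)
  set P₀ := S 0 + E 0 + I 0
  have htotal (t) (ht : t ≥ 0) : S t + E t + I t ≤ P₀ := seir_total_le_initial hτI hS hE hI hInn ht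
  have hP₀ : 0 ≤ P₀ := by linarith [hSnn 0 le_rfl, hEnn 0 le_rfl, hInn 0 le_rfl]
  refine ⟨tendsto_zero_of_integrableOn_Ioi_of_hasDerivAt_le hI (C := P₀ / τE) (fun t ht => ?_)
      hInn (integrableOn_Ioi_of_hasDerivAt_neg hP hInn (m := 0) (fun t ht => ?_)),
    tendsto_zero_of_integrableOn_Ioi_of_hasDerivAt_le hE (C := β₀ * P₀ * P₀ / N) (fun t ht => ?_)
      hEnn (integrableOn_Ioi_of_hasDerivAt_neg hQ hEnn (m := 0) (fun t ht => ?_))⟩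
  · have : E t / τE ≤ P₀ / τE := by gcongr; linarith [hSnn t ht, hInn t ht, htotal t ht]
    have : 0 ≤ I t / τI := div_nonneg (hInn t ht) hτI.le
    linarith
  · exact mul_nonneg hτI.le (by linarith [hSnn t ht, hEnn t ht, hInn t ht])
  · have : β₀ * S t * I t / N ≤ β₀ * P₀ * P₀ / N := by
      have := htotal t ht
      have := hSnn t ht
      gcongr <;> linarith [hEnn t ht, hInn t ht]
    have : 0 ≤ E t / τE := div_nonneg (hEnn t ht) hτE.le
    linarith
  · exact mul_nonneg hτE.le (by linarith [hSnn t ht, hEnn t ht])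

/-- The disease dies out in the base SEIR model: along any nonnegative
solution with total population `N`, `I(t) → 0` and `E(t) → 0` as `t → ∞`. -/
theorem seir_disease_dies_out
    (β₀ τE τI N : ℝ) (hβ₀ : 0 < β₀) (hτE : 0 < τE) (hτI : 0 < τI) (hN : 0 < N)
    (S E I R : ℝ → ℝ)
    (hS : ∀ t ≥ (0:ℝ), HasDerivAt S (-(β₀ * S t * I t / N)) t)
    (hE : ∀ t ≥ (0:ℝ), HasDerivAt E (β₀ * S t * I t / N - E t / τE) t)
    (hI : ∀ t ≥ (0:ℝ), HasDerivAt I (E t / τE - I t / τI) t)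
    (hR : ∀ t ≥ (0:ℝ), HasDerivAt R (I t / τI) t)
    (hnonneg : ∀ t ≥ (0:ℝ), 0 ≤ S t ∧ 0 ≤ E t ∧ 0 ≤ I t ∧ 0 ≤ R t)
    (hsum : S 0 + E 0 + I 0 + R 0 = N) :
    Filter.Tendsto I Filter.atTop (nhds 0) ∧ Filter.Tendsto E Filter.atTop (nhds 0) :=
  seir_disease_dies_out_general β₀ τE τI N hβ₀ hτE hτI hN S E I R hS hE hI hnonneg
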